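/- arXiv:0804.3553 — 2 statements merged into one kernel-verified Lean document; each statement's English description precedes it below -/
import Mathlib

section
/- For a group G, an element ζ ∈ G with ζ^ℓ = 1 (ℓ prime), and a positive integer s, the bar-complex boundary of [ζ]^(s) equals ℓ · ([ζ]^(s−1) ∧ [ζ]), where ∧ is the shuffle product. In particular, over coefficients Z/ℓ the chain [ζ]^(s) is a cycle. -/
open scoped Classical

open Finsupp

/-- Chains of the (normalized) bar complex of `G` over `k`: the free `k`-module
on lists of elements of `G`. -/
abbrev BarChain (G : Type*) [Group G] (k : Type*) [CommRing k] := List G →₀ k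

variable {G : Type*} [Group G] {k : Type*} [CommRing k]

/-- The normalized bar symbol `[x₁|...|x_s]`: zero if some entry equals `1`. -/
noncomputable def barSym (l : List G) : BarChain G k :=
  if (1 : G) ∈ l then 0 else Finsupp.single l 1

/-- Normalization map, killing all basis lists containing `1`. -/
noncomputable def barNorm : BarChain G k →ₗ[k] BarChain G k :=
  Finsupp.lsum k fun l => LinearMap.toSpanSingleton k _ (barSym l)

/-- Merge the `j`-th and `(j+1)`-st entries of a list by multiplying them. -/
def mergeAt (l : List G) (j : ℕ) : List G :=
  l.take j ++ [l.getD j 1 * l.getD (j+1) 1] ++ l.drop (j+2)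

/-- The boundary of a bar symbol (normalized convention: symbols with an entry
equal to `1` are zero). -/
noncomputable def barDList (l : List G) : BarChain G k :=
  if l = [] then 0 else
    barSym l.tail
      + ∑ j ∈ Finset.range (l.length - 1), ((-1 : k)^(j+1)) • barSym (mergeAt l j)
      + ((-1 : k)^l.length) • barSym l.dropLast

/-- The boundary operator of the normalized bar complex. -/
noncomputable def barD : BarChain G k →ₗ[k] BarChain G k :=
  Finsupp.lsum k fun l => LinearMap.toSpanSingleton k _ (barDList l)

/-- The (signed) shuffle of two lists. -/
noncomputable def shuffleList : List G → List G → BarChain G k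
  | [], l => Finsupp.single l 1
  | l, [] => Finsupp.single l 1
  | x :: xs, y :: ys =>
      Finsupp.mapDomain (x :: ·) (shuffleList xs (y :: ys))
        + ((-1 : k)^(xs.length + 1)) • Finsupp.mapDomain (y :: ·) (shuffleList (x :: xs) ys)
  termination_by l1 l2 => l1.length + l2.length

/-- The bilinear shuffle product on bar chains. -/
noncomputable def barSh : BarChain G k →ₗ[k] BarChain G k →ₗ[k] BarChain G k :=
  Finsupp.lsum k fun l1 => LinearMap.toSpanSingleton k _
    ((Finsupp.lsum k fun l2 => LinearMap.toSpanSingleton k _ (shuffleList l1 l2) :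
      BarChain G k →ₗ[k] BarChain G k))

/-- The shuffle product in the normalized bar complex. -/
noncomputable def barNSh (a b : BarChain G k) : BarChain G k :=
  barNorm (barSh a b)

/-- The chain `[ζ]^(s) = Σ_{i₁,...,i_s = 1}^{ℓ-1} [ζ^{i₁}|ζ|...|ζ^{i_s}|ζ]`. -/
noncomputable def zetaChain (ℓ : ℕ) (ζ : G) (s : ℕ) : BarChain G k :=
  ∑ f : Fin s → Fin (ℓ - 1),
    barSym ((List.ofFn (fun j => [ζ ^ ((f j : ℕ) + 1), ζ])).flatten)

/-- The iterated shuffle product `⟨x₁,...,x_i⟩ = [x₁] ∧ ... ∧ [x_i]`. -/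
noncomputable def wedgeList (l : List G) : BarChain G k :=
  l.foldr (fun g acc => barNSh (barSym [g]) acc) (barSym [])

/-! Write `P x` for the chain map prepending `x`, so that
`[ζ]^(s+1) = ∑_c P(ζ^(c+1)) (P ζ [ζ]^(s))`, and note `∂ ∘ P x ∘ P y = P y - P (x y) + P x - P x ∘ ∂ ∘ P y`.
Summed over `c`, the differences `P(ζ^(c+1)) - P(ζ^(c+2))` telescope to `P ζ`, because
`P(ζ^ℓ) = P 1 = 0`. This gives `∂[ζ]^(s+1) = ℓ P ζ [ζ]^(s) - ∑_c P(ζ^(c+1)) ∂(P ζ [ζ]^(s))` and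
`∂(P ζ [ζ]^(s+1)) = ℓ P ζ (P ζ [ζ]^(s)) - P ζ ∂[ζ]^(s+1)`, so by induction every `P ζ [ζ]^(s)` is
a cycle and `∂[ζ]^(s+1) = ℓ P ζ [ζ]^(s)`. Finally, when `[ζ]` is shuffled into `[a₁|ζ|…|a_s|ζ]`,
the insertions just before and just after each `ζ` cancel in pairs, leaving only `[ζ|a₁|ζ|…|a_s|ζ]`;
hence `[ζ]^(s) ∧ [ζ] = P ζ [ζ]^(s)`. -/

noncomputable def barCons (x : G) : BarChain G k →ₗ[k] BarChain G k :=
  Finsupp.lsum k fun l => LinearMap.toSpanSingleton k _ (barSym (x :: l))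

lemma barSym_of_one_mem {l : List G} (h : (1 : G) ∈ l) : (barSym l : BarChain G k) = 0 :=
  if_pos h

lemma barSym_of_one_notMem {l : List G} (h : (1 : G) ∉ l) :
    (barSym l : BarChain G k) = Finsupp.single l 1 :=
  if_neg h

lemma barCons_single (x : G) (l : List G) (c : k) :
    barCons x (Finsupp.single l c) = c • (barSym (x :: l) : BarChain G k) := by
  simp [barCons]

lemma barCons_barSym (x : G) (l : List G) :
    barCons x (barSym l : BarChain G k) = barSym (x :: l) := by
  by_cases h : (1 : G) ∈ l
  · rw [barSym_of_one_mem h, map_zero, barSym_of_one_mem (List.mem_cons_of_mem _ h)]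
  · rw [barSym_of_one_notMem h, barCons_single, one_smul]

lemma barCons_one : barCons (1 : G) = (0 : BarChain G k →ₗ[k] BarChain G k) := by
  ext l : 2
  simp [barCons_single, barSym_of_one_mem]

lemma barNorm_single (l : List G) (c : k) :
    barNorm (Finsupp.single l c) = c • (barSym l : BarChain G k) := by
  simp [barNorm]

lemma barD_barSym {l : List G} (h : (1 : G) ∉ l) :
    barD (barSym l : BarChain G k) = barDList l := by
  simp [barSym_of_one_notMem h, barD]

lemma mergeAt_cons_succ (x : G) (l : List G) (j : ℕ) :
    mergeAt (x :: l) (j + 1) = x :: mergeAt l j := by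
  simp [mergeAt]

lemma mergeAt_cons_cons_zero (x y : G) (l : List G) :
    mergeAt (x :: y :: l) 0 = (x * y) :: l := by
  simp [mergeAt]

lemma barDList_cons_cons (x y : G) (l : List G) :
    (barDList (x :: y :: l) : BarChain G k)
      = barSym (y :: l) - barSym ((x * y) :: l) + barSym (x :: l)
        - barCons x (barDList (y :: l)) := by
  have hsum : ∑ j ∈ Finset.range (l.length + 1), (-1 : k) ^ (j + 1) •
        (barSym (mergeAt (x :: y :: l) j) : BarChain G k)
      = -barSym ((x * y) :: l) - ∑ j ∈ Finset.range l.length,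
          (-1 : k) ^ (j + 1) • barSym (x :: mergeAt (y :: l) j) := by
    simp only [Finset.sum_range_succ', mergeAt_cons_succ, mergeAt_cons_cons_zero, pow_succ _ (_ + 1),
      mul_neg_one, neg_smul, Finset.sum_neg_distrib, zero_add, pow_one, one_smul]
    abel
  simp only [barDList, List.cons_ne_nil, if_false, List.length_cons, add_tsub_cancel_right,
    List.tail_cons, List.dropLast_cons_cons, map_add, map_sum, map_smul, barCons_barSym, hsum,
    pow_succ _ (l.length + 1)]
  module

lemma barD_barCons_barCons (x y : G) (v : BarChain G k) :
    barD (barCons x (barCons y v))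
      = barCons y v - barCons (x * y) v + barCons x v - barCons x (barD (barCons y v)) := by
  induction v using Finsupp.induction_linear with
  | zero => simp
  | add v w hv hw => simp only [map_add, hv, hw]; abel
  | single l c =>
    simp only [barCons_single, map_smul, barCons_barSym, ← smul_sub, ← smul_add]
    congr 1
    by_cases hx : x = 1
    · subst hx; simp [barSym_of_one_mem, barCons_one]
    by_cases hy : y = 1
    · subst hy; simp [barSym_of_one_mem]
    by_cases hl : (1 : G) ∈ l
    · simp [barSym_of_one_mem, hl]
    rw [barD_barSym, barD_barSym, barDList_cons_cons] <;>
      simp [hl, Ne.symm hx, Ne.symm hy]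

lemma zetaChain_zero (ℓ : ℕ) (ζ : G) : (zetaChain ℓ ζ 0 : BarChain G k) = barSym [] := by
  simp [zetaChain]

lemma zetaChain_succ (ℓ : ℕ) (ζ : G) (s : ℕ) :
    (zetaChain ℓ ζ (s + 1) : BarChain G k)
      = ∑ c : Fin (ℓ - 1), barCons (ζ ^ ((c : ℕ) + 1)) (barCons ζ (zetaChain ℓ ζ s)) := by
  simp only [zetaChain, map_sum, barCons_barSym]
  rw [← (Fin.consEquiv fun _ => Fin (ℓ - 1)).sum_comp, Fintype.sum_prod_type]
  simp [Fin.consEquiv, List.ofFn_succ]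

section Cycle

variable {ℓ : ℕ} {ζ : G}

lemma sum_barCons_pow_telescope (hζ : ζ ^ ℓ = 1) (v : BarChain G k) :
    ∑ c : Fin (ℓ - 1), (barCons ζ v + barCons (ζ ^ ((c : ℕ) + 1)) v - barCons (ζ ^ ((c : ℕ) + 2)) v)
      = (ℓ : k) • barCons ζ v := by
  rcases ℓ with _ | ℓ
  · simp
  have htelescope : ∑ i ∈ Finset.range ℓ, (barCons (ζ ^ (i + 1)) v - barCons (ζ ^ (i + 1 + 1)) v)
      = barCons ζ v := by
    rw [Finset.sum_range_sub' (fun i => barCons (ζ ^ (i + 1)) v), hζ, barCons_one, pow_one,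
      LinearMap.zero_apply, sub_zero]
  simp only [add_sub_assoc, Finset.sum_add_distrib, add_tsub_cancel_right,
    Fin.sum_univ_eq_sum_range (fun i => barCons (ζ ^ (i + 1)) v - barCons (ζ ^ (i + 2)) v),
    htelescope, Finset.sum_const, Finset.card_univ, Fintype.card_fin, Nat.cast_succ, add_smul,
    one_smul, Nat.cast_smul_eq_nsmul]

lemma barD_sum_barCons_pow_barCons (hζ : ζ ^ ℓ = 1) (v : BarChain G k) :
    barD (∑ c : Fin (ℓ - 1), barCons (ζ ^ ((c : ℕ) + 1)) (barCons ζ v))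
      = (ℓ : k) • barCons ζ v
        - ∑ c : Fin (ℓ - 1), barCons (ζ ^ ((c : ℕ) + 1)) (barD (barCons ζ v)) := by
  simp only [map_sum, barD_barCons_barCons, ← pow_succ, add_assoc, ← Finset.sum_sub_distrib,
    ← sum_barCons_pow_telescope hζ v]
  exact Finset.sum_congr rfl fun c _ => by abel

lemma barD_barCons_sum_barCons_pow (hζ : ζ ^ ℓ = 1) (v : BarChain G k) :
    barD (barCons ζ (∑ c : Fin (ℓ - 1), barCons (ζ ^ ((c : ℕ) + 1)) v))
      = (ℓ : k) • barCons ζ v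
        - barCons ζ (barD (∑ c : Fin (ℓ - 1), barCons (ζ ^ ((c : ℕ) + 1)) v)) := by
  simp only [map_sum, barD_barCons_barCons, ← pow_succ', add_assoc, ← Finset.sum_sub_distrib,
    ← sum_barCons_pow_telescope hζ v]
  exact Finset.sum_congr rfl fun c _ => by abel

lemma barD_zetaChain_succ_of_barD_barCons (hζ : ζ ^ ℓ = 1) {s : ℕ}
    (hcycle : barD (barCons ζ (zetaChain ℓ ζ s) : BarChain G k) = 0) :
    barD (zetaChain ℓ ζ (s + 1) : BarChain G k) = (ℓ : k) • barCons ζ (zetaChain ℓ ζ s) := by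
  rw [zetaChain_succ, barD_sum_barCons_pow_barCons hζ, hcycle]
  simp

lemma barD_barCons_zetaChain (hζ : ζ ^ ℓ = 1) :
    ∀ s, barD (barCons ζ (zetaChain ℓ ζ s) : BarChain G k) = 0
  | 0 => by
    rw [zetaChain_zero, barCons_barSym]
    by_cases h : ζ = 1
    · simp [h, barSym_of_one_mem]
    · rw [barD_barSym (by simpa using Ne.symm h)]
      simp [barDList]
  | s + 1 => by
    rw [zetaChain_succ, barD_barCons_sum_barCons_pow hζ, ← zetaChain_succ,
      barD_zetaChain_succ_of_barD_barCons hζ (barD_barCons_zetaChain hζ s), map_smul, sub_self]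

lemma barD_zetaChain_succ (hζ : ζ ^ ℓ = 1) (s : ℕ) :
    barD (zetaChain ℓ ζ (s + 1) : BarChain G k) = (ℓ : k) • barCons ζ (zetaChain ℓ ζ s) :=
  barD_zetaChain_succ_of_barD_barCons hζ (barD_barCons_zetaChain hζ s)

end Cycle

lemma shuffleList_nil_right (l : List G) : (shuffleList l [] : BarChain G k) = Finsupp.single l 1 := by
  cases l <;> simp [shuffleList]

lemma shuffleList_cons_cons (x : G) (xs : List G) (y : G) (ys : List G) :
    (shuffleList (x :: xs) (y :: ys) : BarChain G k)
      = Finsupp.mapDomain (x :: ·) (shuffleList xs (y :: ys))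
        + (-1 : k) ^ (xs.length + 1) • Finsupp.mapDomain (y :: ·) (shuffleList (x :: xs) ys) := by
  rw [shuffleList]

lemma barNorm_mapDomain_cons (x : G) (v : BarChain G k) :
    barNorm (Finsupp.mapDomain (x :: ·) v) = barCons x (barNorm v) := by
  induction v using Finsupp.induction_linear with
  | zero => simp
  | add v w hv hw => rw [Finsupp.mapDomain_add, map_add, hv, hw, map_add, map_add]
  | single l c =>
    rw [Finsupp.mapDomain_single, barNorm_single, barNorm_single, map_smul, barCons_barSym]

lemma barNorm_shuffleList_flatMap_pair (y : G) (as : List G) :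
    barNorm (shuffleList (as.flatMap fun a => [a, y]) [y] : BarChain G k)
      = barSym (y :: as.flatMap fun a => [a, y]) := by
  induction as with
  | nil => rw [List.flatMap_nil, shuffleList, barNorm_single, one_smul]
  | cons a as ih =>
    have hr : (as.flatMap fun a => [a, y]).length = 2 * as.length := by
      simp [List.length_flatMap, mul_comm]
    rw [List.flatMap_cons, List.cons_append, List.cons_append, List.nil_append]
    generalize as.flatMap (fun a => [a, y]) = r at ih hr ⊢
    have hsign₁ : (-1 : k) ^ ((y :: r).length + 1) = 1 := by
      rw [List.length_cons, hr]
      exact Even.neg_one_pow ⟨as.length + 1, by ring⟩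
    have hsign₂ : (-1 : k) ^ (r.length + 1) = -1 := by
      rw [hr]
      exact Odd.neg_one_pow ⟨as.length, rfl⟩
    rw [shuffleList_cons_cons, shuffleList_cons_cons, shuffleList_nil_right, shuffleList_nil_right,
      hsign₁, hsign₂]
    simp only [one_smul, neg_one_smul, map_add, map_neg, barNorm_mapDomain_cons, barNorm_single, ih,
      barCons_barSym, add_neg_cancel, map_zero, zero_add]

lemma barNSh_barSym_flatMap_pair (y : G) (as : List G) :
    barNSh (barSym (as.flatMap fun a => [a, y]) : BarChain G k) (barSym [y])
      = barSym (y :: as.flatMap fun a => [a, y]) := by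
  by_cases hy : y = 1
  · simp [hy, barNSh, barSym_of_one_mem]
  by_cases hl : (1 : G) ∈ as.flatMap fun a => [a, y]
  · simp [barNSh, barSym_of_one_mem, hl]
  rw [barNSh, barSym_of_one_notMem hl, barSym_of_one_notMem (by simpa using Ne.symm hy)]
  simpa [barSh] using barNorm_shuffleList_flatMap_pair y as

lemma barNSh_zetaChain_barSym_singleton (ℓ : ℕ) (ζ : G) (s : ℕ) :
    barNSh (zetaChain ℓ ζ s : BarChain G k) (barSym [ζ]) = barCons ζ (zetaChain ℓ ζ s) := by
  simp only [zetaChain, barNSh, map_sum, LinearMap.sum_apply, barCons_barSym]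
  refine Finset.sum_congr rfl fun f _ => ?_
  have hpairs : (List.ofFn fun j => [ζ ^ ((f j : ℕ) + 1), ζ]).flatten
      = (List.ofFn fun j => ζ ^ ((f j : ℕ) + 1)).flatMap fun a => [a, ζ] := by
    simp [List.flatMap_def, List.map_ofFn, Function.comp_def]
  rw [hpairs]
  exact barNSh_barSym_flatMap_pair ζ _

theorem stmt1_general {G : Type*} [Group G]
    (ℓ : ℕ) (ζ : G) (hζ : ζ ^ ℓ = 1) (s : ℕ) (hs : 0 < s) :
    (∀ (k : Type) (_ : CommRing k),
      barD (zetaChain ℓ ζ s : BarChain G k)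
        = (ℓ : k) • barNSh (zetaChain ℓ ζ (s - 1)) (barSym [ζ])) ∧
    barD (zetaChain ℓ ζ s : BarChain G (ZMod ℓ)) = 0 := by
  obtain ⟨t, rfl⟩ : ∃ t, s = t + 1 := ⟨s - 1, by omega⟩
  have hboundary : ∀ (k : Type) [CommRing k], barD (zetaChain ℓ ζ (t + 1) : BarChain G k)
      = (ℓ : k) • barNSh (zetaChain ℓ ζ t) (barSym [ζ]) := fun k _ => by
    rw [barNSh_zetaChain_barSym_singleton, barD_zetaChain_succ hζ]
  exact ⟨fun k _ => hboundary k, by rw [hboundary, ZMod.natCast_self, zero_smul]⟩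

/-- `∂([ζ]^(s)) = ℓ · ([ζ]^(s-1) ∧ [ζ])`; in particular over `ℤ/ℓ`
the chain `[ζ]^(s)` is a cycle. -/
theorem stmt1 {G : Type*} [Group G]
    (ℓ : ℕ) (hℓ : ℓ.Prime) (ζ : G) (hζ : ζ ^ ℓ = 1) (s : ℕ) (hs : 0 < s) :
    (∀ (k : Type) (_ : CommRing k),
      barD (zetaChain ℓ ζ s : BarChain G k)
        = (ℓ : k) • barNSh (zetaChain ℓ ζ (s - 1)) (barSym [ζ])) ∧
    barD (zetaChain ℓ ζ s : BarChain G (ZMod ℓ)) = 0 :=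
  stmt1_general ℓ ζ hζ s hs
end

section
/- The group SE₂ over R = Z[1/ℓ, ξ] is generated by the finite set {z, u₁, ..., u_r, a, b}, where z = D(ξ), u_i = D(1−ξ^i), a = E(0), b = E(1); that is, every D(v) and every E(x) is a word in these elements. -/
/-- The Cohn relations defining `SE₂` over a commutative ring `R`: generators
`D u` (`u ∈ Rˣ`) and `E x` (`x ∈ R`), relations
(I) `E x · E 0 · E y = D (-1) · E (x+y)`,
(II) `E x = D u · E (x u²) · D u`,
(III) `E u⁻¹ · E u · E u⁻¹ = D (-u)`,
(IV) `D u · D v = D (u v)`. -/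
def SE2Rels (R : Type*) [CommRing R] : Set (FreeGroup ((Rˣ) ⊕ R)) :=
  {w | (∃ x y : R,
          w = FreeGroup.of (Sum.inr x) * FreeGroup.of (Sum.inr (0 : R)) *
              FreeGroup.of (Sum.inr y) *
              (FreeGroup.of (Sum.inl (-1 : Rˣ)) * FreeGroup.of (Sum.inr (x + y)))⁻¹)
     ∨ (∃ (x : R) (u : Rˣ),
          w = FreeGroup.of (Sum.inr x) *
              (FreeGroup.of (Sum.inl u) * FreeGroup.of (Sum.inr (x * (u : R) ^ 2)) *
               FreeGroup.of (Sum.inl u))⁻¹)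
     ∨ (∃ u : Rˣ,
          w = FreeGroup.of (Sum.inr ((u⁻¹ : Rˣ) : R)) * FreeGroup.of (Sum.inr ((u : Rˣ) : R)) *
              FreeGroup.of (Sum.inr ((u⁻¹ : Rˣ) : R)) *
              (FreeGroup.of (Sum.inl (-u)))⁻¹)
     ∨ (∃ u v : Rˣ,
          w = FreeGroup.of (Sum.inl u) * FreeGroup.of (Sum.inl v) *
              (FreeGroup.of (Sum.inl (u * v)))⁻¹)}

/-- The group `SE₂` over `R`, presented by the Cohn relations. -/
abbrev SE2 (R : Type*) [CommRing R] := PresentedGroup (SE2Rels R)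

/-- The generator `D u` of `SE₂`. -/
def SE2.D {R : Type*} [CommRing R] (u : Rˣ) : SE2 R := PresentedGroup.of (Sum.inl u)

/-- The generator `E x` of `SE₂`. -/
def SE2.E {R : Type*} [CommRing R] (x : R) : SE2 R := PresentedGroup.of (Sum.inr x)

/-!
Relations (I) and (III) make `x ↦ E x` additive on the set of `x` with `E x` in a subgroup `K`
containing `E 0` and `E 1`, and relation (II) lets `D u ∈ K` multiply that set by `u²` and by
`u⁻²`. As `ξ = (ξ^(r+1))²`, it contains `ℤ[ξ]`. Let `v = ∏_{i ≤ r} (1 - ξ^i)`; pairing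
`1 - ξ^(ℓ-i) = -ξ^(-i) (1 - ξ^i)` in `ℓ = ∏_{i < ℓ} (1 - ξ^i)` gives `v² = ℓ w` with
`w = ∏_{i ≤ r} (-ξ^i) ∈ ℤ[ξ]`.
Every `x ∈ ℤ[1/ℓ, ξ]` has `ℓ^k x ∈ ℤ[ξ]` for some `k`, hence `x v^(2k) = w^k ℓ^k x ∈ ℤ[ξ]`, so
`E x ∈ K`; relation (III) then yields every `D u`.
-/

open Finset

theorem exists_pow_mul_mem_of_mem_adjoin_insert {R S : Type*} [CommSemiring R] [CommSemiring S]
    [Algebra R S] {B : Subalgebra R S} {s t : S} {T : Set S} (hs : s ∈ B) (hst : s * t = 1)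
    (hT : T ⊆ B) {x : S} (hx : x ∈ Algebra.adjoin R (insert t T)) :
    ∃ k : ℕ, s ^ k * x ∈ B := by
  induction hx using Algebra.adjoin_induction with
  | mem x hx =>
    rcases hx with rfl | hx
    · exact ⟨1, by rw [pow_one, hst]; exact B.one_mem⟩
    · exact ⟨0, by rw [pow_zero, one_mul]; exact hT hx⟩
  | algebraMap a => exact ⟨0, by rw [pow_zero, one_mul]; exact B.algebraMap_mem a⟩
  | add x y _ _ hx hy =>
    obtain ⟨k, hk⟩ := hx
    obtain ⟨m, hm⟩ := hy
    refine ⟨k + m, ?_⟩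
    have : s ^ (k + m) * (x + y) = s ^ m * (s ^ k * x) + s ^ k * (s ^ m * y) := by ring
    rw [this]
    exact B.add_mem (B.mul_mem (B.pow_mem hs m) hk) (B.mul_mem (B.pow_mem hs k) hm)
  | mul x y _ _ hx hy =>
    obtain ⟨k, hk⟩ := hx
    obtain ⟨m, hm⟩ := hy
    refine ⟨k + m, ?_⟩
    have : s ^ (k + m) * (x * y) = (s ^ k * x) * (s ^ m * y) := by ring
    rw [this]
    exact B.mul_mem hk hm

theorem prod_range_one_sub_pow_sq {R : Type*} [CommRing R] {r : ℕ} {x : R}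
    (hx : x ^ (2 * r + 1) = 1) :
    (∏ i ∈ range r, (1 - x ^ (i + 1))) ^ 2 =
      (∏ i ∈ range (2 * r), (1 - x ^ (i + 1))) * ∏ i ∈ range r, (-x ^ (i + 1)) := by
  rw [sq, two_mul, prod_range_add, mul_assoc]
  congr 1
  rw [← prod_range_reflect (fun j => 1 - x ^ (r + j + 1)) r, ← prod_mul_distrib]
  refine prod_congr rfl fun i hi => ?_
  have hi : i < r := mem_range.mp hi
  have hpow : x ^ (r + (r - 1 - i) + 1) * x ^ (i + 1) = 1 := by
    rw [← pow_add, show r + (r - 1 - i) + 1 + (i + 1) = 2 * r + 1 by omega, hx]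
  linear_combination -hpow

namespace SE2

variable {R : Type*} [CommRing R]

theorem mk_eq_one_of_mem_rels {w : FreeGroup (Rˣ ⊕ R)} (hw : w ∈ SE2Rels R) :
    PresentedGroup.mk (SE2Rels R) w = 1 :=
  (QuotientGroup.eq_one_iff w).mpr (Subgroup.subset_normalClosure hw)

theorem relI (x y : R) : E x * E 0 * E y = D (-1) * E (x + y) := by
  have h := mk_eq_one_of_mem_rels (R := R) (Or.inl ⟨x, y, rfl⟩)
  rwa [map_mul, map_mul, map_inv, map_mul, mul_inv_eq_one] at h

theorem relII (x : R) (u : Rˣ) : E x = D u * E (x * (u : R) ^ 2) * D u := by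
  have h := mk_eq_one_of_mem_rels (R := R) (Or.inr (Or.inl ⟨x, u, rfl⟩))
  rwa [map_mul, map_inv, map_mul, map_mul, mul_inv_eq_one] at h

theorem relIII (u : Rˣ) :
    E ((u⁻¹ : Rˣ) : R) * E (u : R) * E ((u⁻¹ : Rˣ) : R) = D (-u) := by
  have h := mk_eq_one_of_mem_rels (R := R) (Or.inr (Or.inr (Or.inl ⟨u, rfl⟩)))
  rwa [map_mul, map_mul, map_mul, map_inv, mul_inv_eq_one] at h

theorem relIV (u v : Rˣ) : D u * D v = D (u * v) := by
  have h := mk_eq_one_of_mem_rels (R := R) (Or.inr (Or.inr (Or.inr ⟨u, v, rfl⟩)))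
  rwa [map_mul, map_mul, map_inv, mul_inv_eq_one] at h

def DHom : Rˣ →* SE2 R := MonoidHom.mk' D fun u v => (relIV u v).symm

theorem D_inv (u : Rˣ) : D u⁻¹ = (D u)⁻¹ := map_inv DHom u

theorem D_pow (u : Rˣ) (n : ℕ) : D (u ^ n) = D u ^ n := map_pow DHom u n

section Generation

variable {K : Subgroup (SE2 R)}

theorem D_neg_one_mem (h1 : E 1 ∈ K) : D (-1) ∈ K := by
  have h := relIII (1 : Rˣ)
  rw [inv_one, Units.val_one] at h
  exact h ▸ mul_mem (mul_mem h1 h1) h1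

theorem E_add_mem (h0 : E 0 ∈ K) (h1 : E 1 ∈ K) {x y : R} (hx : E x ∈ K) (hy : E y ∈ K) :
    E (x + y) ∈ K := by
  have h : E (x + y) = (D (-1))⁻¹ * (E x * E 0 * E y) := by rw [relI, inv_mul_cancel_left]
  exact h ▸ mul_mem (inv_mem (D_neg_one_mem h1)) (mul_mem (mul_mem hx h0) hy)

theorem E_neg_mem (h0 : E 0 ∈ K) (h1 : E 1 ∈ K) {x : R} (hx : E x ∈ K) : E (-x) ∈ K := by
  have h : E (-x) = (E x * E 0)⁻¹ * (D (-1) * E 0) := by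
    rw [← add_neg_cancel x, ← relI]; group
  exact h ▸ mul_mem (inv_mem (mul_mem hx h0)) (mul_mem (D_neg_one_mem h1) h0)

theorem E_intCast_mem (h0 : E 0 ∈ K) (h1 : E 1 ∈ K) (m : ℤ) : E (m : R) ∈ K := by
  induction m using Int.induction_on with
  | zero => simpa using h0
  | succ m ih => exact_mod_cast E_add_mem h0 h1 ih h1
  | pred m ih =>
    rw [Int.cast_sub, Int.cast_one, sub_eq_add_neg]
    exact E_add_mem h0 h1 ih (E_neg_mem h0 h1 h1)

theorem E_mem_of_mul_sq_mem {u : Rˣ} (hu : D u ∈ K) {x : R} (hx : E (x * (u : R) ^ 2) ∈ K) :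
    E x ∈ K :=
  relII x u ▸ mul_mem (mul_mem hu hx) hu

theorem E_mul_sq_mem {u : Rˣ} (hu : D u ∈ K) {x : R} (hx : E x ∈ K) :
    E (x * (u : R) ^ 2) ∈ K := by
  refine E_mem_of_mul_sq_mem (D_inv u ▸ inv_mem hu) ?_
  rwa [mul_assoc, ← mul_pow, Units.mul_inv, one_pow, mul_one]

theorem E_mem_of_mem_adjoin (h0 : E 0 ∈ K) (h1 : E 1 ∈ K) {z : Rˣ} {n : ℕ}
    (hz : (z : R) ^ (2 * n + 1) = 1) (hDz : D z ∈ K) {y : R}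
    (hy : y ∈ Algebra.adjoin ℤ {(z : R)}) : E y ∈ K := by
  have hsq : ((z ^ (n + 1) : Rˣ) : R) ^ 2 = z := by
    rw [Units.val_pow_eq_pow_val, ← pow_mul, show (n + 1) * 2 = 2 * n + 1 + 1 by ring,
      pow_succ, hz, one_mul]
  rw [Algebra.adjoin_singleton_eq_range_aeval, AlgHom.mem_range] at hy
  obtain ⟨p, rfl⟩ := hy
  induction p using Polynomial.induction_on with
  | C m => simpa using E_intCast_mem h0 h1 m
  | add p q hp hq => rw [map_add]; exact E_add_mem h0 h1 hp hq
  | monomial m a ih =>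
    rw [pow_succ, ← mul_assoc, map_mul, Polynomial.aeval_X]
    have h := E_mul_sq_mem (D_pow z (n + 1) ▸ pow_mem hDz (n + 1)) ih
    rwa [hsq] at h

theorem eq_top_of_forall_E_mem (hE : ∀ x : R, E x ∈ K) : K = ⊤ := by
  have hD : ∀ u : Rˣ, D u ∈ K := fun u => by
    have h : D u = D (-1) * D (-u) := by rw [relIV, neg_one_mul, neg_neg]
    exact h ▸ mul_mem (D_neg_one_mem (hE 1))
      (relIII u ▸ mul_mem (mul_mem (hE _) (hE _)) (hE _))
  rw [Subgroup.eq_top_iff']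
  refine PresentedGroup.generated_by _ _ fun j => ?_
  rcases j with u | x
  · exact hD u
  · exact hE x

theorem eq_top_of_isPrimitiveRoot [IsDomain R] {r : ℕ} {ζ : R}
    (hζ : IsPrimitiveRoot ζ (2 * r + 1)) (hℓ : IsUnit ((2 * r + 1 : ℕ) : R))
    (hloc : ∀ x : R, ∃ k : ℕ, ((2 * r + 1 : ℕ) : R) ^ k * x ∈ Algebra.adjoin ℤ {ζ})
    (h0 : E 0 ∈ K) (h1 : E 1 ∈ K) (hDζ : ∀ u : Rˣ, (u : R) = ζ → D u ∈ K)
    (hDu : ∀ (u : Rˣ) (i : ℕ), 1 ≤ i → i ≤ r → (u : R) = 1 - ζ ^ i → D u ∈ K) : K = ⊤ := by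
  have hprod : ∏ i ∈ range (2 * r), (1 - ζ ^ (i + 1)) = ((2 * r + 1 : ℕ) : R) := by
    rw [hζ.prod_one_sub_pow_eq_order]; push_cast; rfl
  have hunit (i : ℕ) (hi : i < 2 * r) : IsUnit (1 - ζ ^ (i + 1)) :=
    isUnit_of_dvd_unit (hprod ▸ dvd_prod_of_mem _ (mem_range.mpr hi)) hℓ
  obtain ⟨v, hDv, hv⟩ : ∏ i ∈ range r, (1 - ζ ^ (i + 1)) ∈
      (K.comap DHom).toSubmonoid.map (Units.coeHom R) := by
    refine Submonoid.prod_mem _ fun i hi => ?_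
    have hi : i < r := mem_range.mp hi
    have hu := hunit i (by omega)
    exact ⟨hu.unit, hDu _ (i + 1) (by omega) hi hu.unit_spec, hu.unit_spec⟩
  have hv : (v : R) ^ 2 = ((2 * r + 1 : ℕ) : R) * ∏ i ∈ range r, (-ζ ^ (i + 1)) := by
    rw [← hprod, ← prod_range_one_sub_pow_sq hζ.pow_eq_one]
    exact congrArg (· ^ 2) hv
  obtain ⟨z, rfl⟩ := hζ.isUnit (by omega)
  refine eq_top_of_forall_E_mem fun x => ?_
  obtain ⟨k, hk⟩ := hloc x
  refine E_mem_of_mul_sq_mem (u := v ^ k) (pow_mem hDv k)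
    (E_mem_of_mem_adjoin h0 h1 hζ.pow_eq_one (hDζ z rfl) ?_)
  have hw : ∏ i ∈ range r, (-(z : R) ^ (i + 1)) ∈ Algebra.adjoin ℤ {(z : R)} :=
    prod_mem fun i _ => neg_mem (pow_mem (Algebra.self_mem_adjoin_singleton ℤ _) _)
  have : x * ((v ^ k : Rˣ) : R) ^ 2 =
      ((2 * r + 1 : ℕ) : R) ^ k * x * (∏ i ∈ range r, (-(z : R) ^ (i + 1))) ^ k := by
    rw [Units.val_pow_eq_pow_val, ← pow_mul, mul_comm k, pow_mul, hv, mul_pow]; ring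
  exact this ▸ mul_mem hk (pow_mem hw k)

end Generation

end SE2

theorem stmt15_general (ℓ r : ℕ) (hr : ℓ = 2 * r + 1)
    (ξ : ℂ) (hξ : IsPrimitiveRoot ξ ℓ) :
    Subgroup.closure
      {g : SE2 ↥(Algebra.adjoin ℤ ({(ℓ : ℂ)⁻¹, ξ} : Set ℂ)) |
        g = SE2.E 0 ∨ g = SE2.E 1 ∨
        (∃ u : (↥(Algebra.adjoin ℤ ({(ℓ : ℂ)⁻¹, ξ} : Set ℂ)))ˣ,
          ((u : ↥(Algebra.adjoin ℤ ({(ℓ : ℂ)⁻¹, ξ} : Set ℂ))) : ℂ) = ξ ∧ g = SE2.D u) ∨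
        (∃ (u : (↥(Algebra.adjoin ℤ ({(ℓ : ℂ)⁻¹, ξ} : Set ℂ)))ˣ) (i : ℕ),
          1 ≤ i ∧ i ≤ r ∧
          ((u : ↥(Algebra.adjoin ℤ ({(ℓ : ℂ)⁻¹, ξ} : Set ℂ))) : ℂ) = 1 - ξ ^ i ∧
          g = SE2.D u)} = ⊤ := by
  subst hr
  set A := Algebra.adjoin ℤ ({((2 * r + 1 : ℕ) : ℂ)⁻¹, ξ} : Set ℂ)
  let ξA : A := ⟨ξ, Algebra.subset_adjoin (by simp)⟩
  let ℓinv : A := ⟨((2 * r + 1 : ℕ) : ℂ)⁻¹, Algebra.subset_adjoin (by simp)⟩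
  have hℓ : ((2 * r + 1 : ℕ) : A) * ℓinv = 1 :=
    Subtype.ext (mul_inv_cancel₀ (Nat.cast_ne_zero.mpr (by omega)))
  have hgen : Algebra.adjoin ℤ {ℓinv, ξA} = ⊤ := by
    rw [← Algebra.adjoin_adjoin_coe_preimage]
    congr 1
    ext x
    simp [Subtype.ext_iff, ℓinv, ξA]
  refine SE2.eq_top_of_isPrimitiveRoot (ζ := ξA) (r := r)
    (.of_map_of_injective (f := A.val) hξ Subtype.val_injective) (.of_mul_eq_one _ hℓ)
    (fun x => exists_pow_mul_mem_of_mem_adjoin_insert (Subalgebra.natCast_mem _ _) hℓ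
      Algebra.subset_adjoin (hgen ▸ Algebra.mem_top))
    (Subgroup.subset_closure (Or.inl rfl)) (Subgroup.subset_closure (Or.inr (Or.inl rfl)))
    (fun u hu => Subgroup.subset_closure
      (Or.inr (Or.inr (Or.inl ⟨u, congrArg Subtype.val hu, rfl⟩))))
    (fun u i hi hir hu => Subgroup.subset_closure
      (Or.inr (Or.inr (Or.inr ⟨u, i, hi, hir, congrArg Subtype.val hu, rfl⟩))))

/-- `SE₂` over `R = ℤ[1/ℓ, ξ]` is generated by the finite set
`{z, u₁, ..., u_r, a, b}` where `z = D(ξ)`, `u_i = D(1 - ξ^i)`, `a = E(0)`,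
`b = E(1)`. -/
theorem stmt15 (ℓ r : ℕ) (hℓ : ℓ.Prime) (hr : ℓ = 2 * r + 1) (hr0 : 0 < r)
    (ξ : ℂ) (hξ : IsPrimitiveRoot ξ ℓ) :
    Subgroup.closure
      {g : SE2 ↥(Algebra.adjoin ℤ ({(ℓ : ℂ)⁻¹, ξ} : Set ℂ)) |
        g = SE2.E 0 ∨ g = SE2.E 1 ∨
        (∃ u : (↥(Algebra.adjoin ℤ ({(ℓ : ℂ)⁻¹, ξ} : Set ℂ)))ˣ,
          ((u : ↥(Algebra.adjoin ℤ ({(ℓ : ℂ)⁻¹, ξ} : Set ℂ))) : ℂ) = ξ ∧ g = SE2.D u) ∨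
        (∃ (u : (↥(Algebra.adjoin ℤ ({(ℓ : ℂ)⁻¹, ξ} : Set ℂ)))ˣ) (i : ℕ),
          1 ≤ i ∧ i ≤ r ∧
          ((u : ↥(Algebra.adjoin ℤ ({(ℓ : ℂ)⁻¹, ξ} : Set ℂ))) : ℂ) = 1 - ξ ^ i ∧
          g = SE2.D u)} = ⊤ :=
  stmt15_general ℓ r hr ξ hξ
end
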